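/- Let n ≥ 2 and let A_n be the n×n upper-shift matrix. (a) If n = 2k+1 is odd, there exists a permutation matrix P ∈ M_n(ℂ) such that Pᵀ A_n P = 𝒜_n, where 𝒜_n is the n×n matrix whose only nonzero entries are (𝒜_n)_{i, k+1+i} = 1 for 1 ≤ i ≤ k and (𝒜_n)_{k+1+i, i+1} = 1 for 1 ≤ i ≤ k. (b) If n = 2k is even, there exists a permutation matrix P ∈ M_n(ℂ) such that Pᵀ A_n P = ℬ_n, where ℬ_n is the n×n matrix whose only nonzero entries are (ℬ_n)_{i, n+1−i} = 1 for 1 ≤ i ≤ k and (ℬ_n)_{k+i, k+2−i} = 1 for 2 ≤ i ≤ k. In particular A_n is congruent to 𝒜_n when n is odd and to ℬ_n when n is even. -/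
import Mathlib

open Matrix

/-- The `n × n` nilpotent upper-shift matrix `A_n`. -/
def shiftMat (n : ℕ) : Matrix (Fin n) (Fin n) ℂ :=
  Matrix.of fun i j => if (j : ℕ) = (i : ℕ) + 1 then 1 else 0

lemma perm_conj {n : ℕ} (σ : Equiv.Perm (Fin n)) (M : Matrix (Fin n) (Fin n) ℂ) :
    (Matrix.of fun i j => if σ i = j then (1:ℂ) else 0)ᵀ * M *
      (Matrix.of fun i j => if σ i = j then (1:ℂ) else 0) =
    Matrix.of fun i j => M (σ.symm i) (σ.symm j) := by
  ext i j
  simp only [Matrix.mul_apply, Matrix.transpose_apply, Matrix.of_apply,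
    Equiv.apply_eq_iff_eq_symm_apply, ite_mul, mul_ite, one_mul, mul_one, zero_mul, mul_zero,
    Finset.sum_ite_eq', Finset.mem_univ, if_true, Finset.sum_ite_eq]

def oddEquiv (k : ℕ) : Equiv.Perm (Fin (2*k+1)) where
  toFun v := ⟨if (v:ℕ) ≤ k then 2*v else 2*v - (2*k+1), by
    have := v.2; split_ifs <;> omega⟩
  invFun p := ⟨if (p:ℕ) % 2 = 0 then (p:ℕ)/2 else k + ((p:ℕ)+1)/2, by
    have := p.2; split_ifs <;> omega⟩
  left_inv v := by
    have := v.2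
    apply Fin.ext
    simp only
    split_ifs <;> omega
  right_inv p := by
    have := p.2
    apply Fin.ext
    simp only
    split_ifs <;> omega

def evenEquiv (k : ℕ) : Equiv.Perm (Fin (2*k)) where
  toFun v := ⟨if (v:ℕ) < k then 2*v else 4*k - 1 - 2*v, by
    have := v.2; split_ifs <;> omega⟩
  invFun p := ⟨if (p:ℕ) % 2 = 0 then (p:ℕ)/2 else 2*k - 1 - ((p:ℕ)-1)/2, by
    have := p.2; split_ifs <;> omega⟩
  left_inv v := by
    have := v.2
    apply Fin.ext
    simp only
    split_ifs <;> omega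
  right_inv p := by
    have := p.2
    apply Fin.ext
    simp only
    split_ifs <;> omega

/-- `A_n` is congruent, via a permutation matrix, to `𝒜_n` when `n = 2k+1`
is odd and to `ℬ_n` when `n = 2k` is even (`k ≥ 1`).  Here (1-indexed):
`(𝒜_n)_{i, k+1+i} = 1` and `(𝒜_n)_{k+1+i, i+1} = 1` for `1 ≤ i ≤ k`;
`(ℬ_n)_{i, n+1-i} = 1` for `1 ≤ i ≤ k` and `(ℬ_n)_{k+i, k+2-i} = 1` for `2 ≤ i ≤ k`. -/
theorem stmt_8 (k : ℕ) (hk : 1 ≤ k) :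
    (∃ σ : Equiv.Perm (Fin (2 * k + 1)),
      (Matrix.of fun i j => if σ i = j then (1 : ℂ) else 0)ᵀ * shiftMat (2 * k + 1) *
          (Matrix.of fun i j => if σ i = j then (1 : ℂ) else 0) =
        Matrix.of fun i j : Fin (2 * k + 1) =>
          if (j : ℕ) = (i : ℕ) + k + 1 ∧ (i : ℕ) < k then 1
          else if (i : ℕ) = (j : ℕ) + k ∧ 1 ≤ (j : ℕ) ∧ (j : ℕ) ≤ k then 1
          else 0) ∧
    (∃ σ : Equiv.Perm (Fin (2 * k)),
      (Matrix.of fun i j => if σ i = j then (1 : ℂ) else 0)ᵀ * shiftMat (2 * k) *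
          (Matrix.of fun i j => if σ i = j then (1 : ℂ) else 0) =
        Matrix.of fun i j : Fin (2 * k) =>
          if (i : ℕ) + (j : ℕ) = 2 * k - 1 ∧ (i : ℕ) < k then 1
          else if (i : ℕ) + (j : ℕ) = 2 * k ∧ k < (i : ℕ) then 1
          else 0) := by
  constructor
  · refine ⟨(oddEquiv k).symm, ?_⟩
    rw [perm_conj]
    ext i j
    have hi := i.2
    have hj := j.2
    simp only [Matrix.of_apply, shiftMat, Equiv.symm_symm, oddEquiv, Equiv.coe_fn_mk,
      Matrix.of_apply]
    split_ifs <;> first | rfl | omega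
  · refine ⟨(evenEquiv k).symm, ?_⟩
    rw [perm_conj]
    ext i j
    have hi := i.2
    have hj := j.2
    simp only [Matrix.of_apply, shiftMat, Equiv.symm_symm, evenEquiv, Equiv.coe_fn_mk,
      Matrix.of_apply]
    split_ifs <;> first | rfl | omega
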